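/- arXiv:1504.03755 — 2 statements merged into one kernel-verified Lean document; each statement's English description precedes it below -/
import Mathlib

section
/- Let K be a field of characteristic zero equipped with a derivation δ : K → K, and fix natural numbers n ≥ 1 and h. Let ∇_h : K^n → K^{n(h+1)} be the map a ↦ (a, δa, …, δ^h a) (δ applied coordinatewise). Then for every Zariski closed subset V ⊆ K^{n(h+1)}, the collection of maximal elements (under inclusion) of the family 𝒫(V) = { W ⊆ V : W is an irreducible Zariski closed set and W ∩ ∇_h(K^n) is dense in W } is finite, and every member of 𝒫(V) is contained in a maximal member of 𝒫(V). (This is Lemma 2.12 of the paper: a variety has only finitely many maximal irreducible prolongation admissible subvarieties.) -/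
/-
The Zariski topology on `K^N` is Noetherian, since ideals of `K[x₁, …, x_N]` satisfy the ascending
chain condition. Put `D = closure (V ∩ ∇_h(K^n))` and write `D` as a finite union of irreducible
closed sets `Z₁, …, Z_k`, none contained in another. Since the differential points are dense in
`D`, `D = ⋃ closure (Zᵢ ∩ ∇_h(K^n))`, so each irreducible `Zᵢ` lies in some
`closure (Zⱼ ∩ ∇_h(K^n)) ⊆ Zⱼ`, forcing `i = j`: every `Zᵢ` is prolongation admissible. Every
prolongation admissible `W ⊆ V` lies in `D`, hence, being irreducible, in some `Zᵢ`. So the `Zᵢ`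
form a finite cofinal subfamily, and they are precisely the maximal members.
-/

/-- The Zariski topology on affine space `σ → K`: the closed sets are the common
zero loci of sets of polynomials over `K`. -/
def zariskiTopology (K : Type*) [CommRing K] (σ : Type*) :
    TopologicalSpace (σ → K) :=
  TopologicalSpace.generateFrom
    {U | ∃ f : MvPolynomial σ K, U = {x | MvPolynomial.eval x f ≠ 0}}

/-- The prolongation map `∇_h : K^n → K^{n(h+1)}`, `a ↦ (a, δa, …, δ^h a)`,
with `K^{n(h+1)}` indexed by pairs `(i, j) : Fin n × Fin (h+1)`. -/
def nablaMap {K : Type*} (δ : K → K) (n h : ℕ) (a : Fin n → K) :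
    Fin n × Fin (h + 1) → K :=
  fun p => δ^[(p.2 : ℕ)] (a p.1)

/-- The family `𝒫(V)` of irreducible Zariski closed subsets `W ⊆ V` whose
differential points `W ∩ ∇_h(K^n)` are dense in `W`. -/
def proAdmissibleIn {K : Type*} [Field K] (δ : K → K) (n h : ℕ)
    (V : Set (Fin n × Fin (h + 1) → K)) : Set (Set (Fin n × Fin (h + 1) → K)) :=
  {W | W ⊆ V ∧ @IsClosed _ (zariskiTopology K (Fin n × Fin (h + 1))) W ∧
    @IsIrreducible _ (zariskiTopology K (Fin n × Fin (h + 1))) W ∧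
    W ⊆ @closure _ (zariskiTopology K (Fin n × Fin (h + 1)))
      (W ∩ Set.range (nablaMap δ n h))}

theorem Set.setOf_maximal_subset_of_cofinal {α : Type*} [PartialOrder α] {P : α → Prop}
    {T : Set α} (hTP : ∀ t ∈ T, P t) (hcof : ∀ a, P a → ∃ t ∈ T, a ≤ t) :
    {a | Maximal P a} ⊆ T := by
  intro a ha
  obtain ⟨t, htT, hat⟩ := hcof a ha.1
  rwa [le_antisymm hat (ha.2 (hTP t htT) hat)]

theorem Set.Finite.exists_le_maximal_of_cofinal {α : Type*} [PartialOrder α] {P : α → Prop}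
    {T : Set α} (hT : T.Finite) (hTP : ∀ t ∈ T, P t) (hcof : ∀ a, P a → ∃ t ∈ T, a ≤ t)
    {a : α} (ha : P a) : ∃ m, Maximal P m ∧ a ≤ m := by
  obtain ⟨t, htT, hat⟩ := hcof a ha
  obtain ⟨m, htm, hm⟩ := hT.exists_le_maximal htT
  refine ⟨m, ⟨hTP m hm.1, fun b hb hmb => ?_⟩, hat.trans htm⟩
  obtain ⟨t', ht'T, hbt'⟩ := hcof b hb
  exact hbt'.trans (hm.2 ht'T (hmb.trans hbt'))

section Irreducible

open TopologicalSpace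

variable {X : Type*} [TopologicalSpace X]

theorem IsIrreducible.exists_subset_of_subset_sUnion {s : Set X} {C : Set (Set X)}
    (hs : IsIrreducible s) (hC : C.Finite) (hcl : ∀ Z ∈ C, IsClosed Z) (hsC : s ⊆ ⋃₀ C) :
    ∃ Z ∈ C, s ⊆ Z := by
  lift C to Finset (Set X) using hC
  exact isIrreducible_iff_sUnion_isClosed.mp hs C hcl hsC

theorem subset_closure_inter_of_maximal {S : Set X} {C : Set (Set X)} (hC : C.Finite)
    (hcl : ∀ Z ∈ C, IsClosed Z) (hdense : ⋃₀ C ⊆ closure (⋃₀ C ∩ S)) {Z : Set X}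
    (hZ : Maximal (· ∈ C) Z) (hirr : IsIrreducible Z) : Z ⊆ closure (Z ∩ S) := by
  have hcover : Z ⊆ ⋃₀ ((fun Z' => closure (Z' ∩ S)) '' C) := by
    rw [Set.sUnion_image, ← hC.closure_biUnion, ← Set.iUnion₂_inter, ← Set.sUnion_eq_biUnion]
    exact (Set.subset_sUnion_of_mem hZ.1).trans hdense
  obtain ⟨_, ⟨Z', hZ'C, rfl⟩, hZZ'⟩ := hirr.exists_subset_of_subset_sUnion (hC.image _)
    (Set.forall_mem_image.2 fun _ _ => isClosed_closure) hcover
  have hZ'Z : Z' ⊆ Z :=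
    hZ.2 hZ'C (hZZ'.trans (closure_minimal Set.inter_subset_left (hcl Z' hZ'C)))
  exact hZZ'.trans (closure_mono (Set.inter_subset_inter_left S hZ'Z))

def admissibleIn (V S : Set X) : Set (Set X) :=
  {W | W ⊆ V ∧ IsClosed W ∧ IsIrreducible W ∧ W ⊆ closure (W ∩ S)}

theorem exists_finite_cofinal_admissibleIn [NoetherianSpace X] {V : Set X}
    (hV : IsClosed V) (S : Set X) :
    ∃ T : Set (Set X), T.Finite ∧ (∀ Z ∈ T, Z ∈ admissibleIn V S) ∧
      ∀ W ∈ admissibleIn V S, ∃ Z ∈ T, W ⊆ Z := by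
  obtain ⟨C, hC, hcl, hirr, hD⟩ :=
    NoetherianSpace.exists_finite_set_isClosed_irreducible (isClosed_closure (s := V ∩ S))
  have hDV : closure (V ∩ S) ⊆ V := closure_minimal Set.inter_subset_left hV
  have hdense : ⋃₀ C ⊆ closure (⋃₀ C ∩ S) := by
    rw [← hD]
    exact closure_mono fun x hx => ⟨subset_closure hx, hx.2⟩
  refine ⟨{Z | Maximal (· ∈ C) Z}, hC.subset fun Z hZ => hZ.1, fun Z hZ => ?_, ?_⟩
  · have hZD : Z ⊆ closure (V ∩ S) := hD ▸ Set.subset_sUnion_of_mem hZ.1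
    exact ⟨hZD.trans hDV, hcl Z hZ.1, hirr Z hZ.1,
      subset_closure_inter_of_maximal hC hcl hdense hZ (hirr Z hZ.1)⟩
  · rintro W ⟨hWV, -, hWirr, hWdense⟩
    have hWD : W ⊆ ⋃₀ C :=
      hD ▸ hWdense.trans (closure_mono (Set.inter_subset_inter_left S hWV))
    obtain ⟨Z', hZ'C, hWZ'⟩ := hWirr.exists_subset_of_subset_sUnion hC hcl hWD
    obtain ⟨Z, hZ'Z, hZ⟩ := hC.exists_le_maximal hZ'C
    exact ⟨Z, hZ, hWZ'.trans hZ'Z⟩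

end Irreducible

section Zariski

open MvPolynomial TopologicalSpace

variable {K : Type*} [Field K] {σ : Type*}

attribute [local instance] zariskiTopology

theorem isTopologicalBasis_zariskiTopology :
    IsTopologicalBasis
      {U : Set (σ → K) | ∃ f : MvPolynomial σ K, U = {x | eval x f ≠ 0}} where
  exists_subset_inter := by
    rintro _ ⟨f, rfl⟩ _ ⟨g, rfl⟩ x hx
    exact ⟨_, ⟨f * g, rfl⟩, by simpa using hx, fun y hy => by simpa [not_or] using hy⟩
  sUnion_eq := Set.eq_univ_of_forall fun x => ⟨_, ⟨1, rfl⟩, by simp⟩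
  eq_generateFrom := rfl

theorem zeroLocus_vanishingIdeal_of_isClosed {C : Set (σ → K)} (hC : IsClosed C) :
    zeroLocus K (vanishingIdeal K C) = C := by
  refine le_antisymm (fun x hx => ?_) (zeroLocus_vanishingIdeal_le C)
  by_contra hxC
  obtain ⟨_, ⟨f, rfl⟩, hfx, hfC⟩ :=
    (isTopologicalBasis_zariskiTopology.isOpen_iff.mp hC.isOpen_compl) x hxC
  exact hfx (hx f fun y hy => not_not.mp fun hfy => hfC hfy hy)

theorem noetherianSpace_zariskiTopology [Finite σ] :
    NoetherianSpace (σ → K) := by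
  refine ((noetherianSpace_TFAE (σ → K)).out 0 1).mpr <|
    StrictAnti.wellFoundedLT (f := fun C : Closeds (σ → K) =>
      vanishingIdeal K (C : Set (σ → K))) fun C C' hCC' =>
        (vanishingIdeal_anti_mono hCC'.le).lt_of_ne fun heq => hCC'.ne ?_
  apply SetLike.coe_injective
  rw [← zeroLocus_vanishingIdeal_of_isClosed C.isClosed,
    ← zeroLocus_vanishingIdeal_of_isClosed C'.isClosed]
  exact congrArg (zeroLocus K) heq.symm

end Zariski

theorem finitely_many_maximal_prolongation_admissible_general
    {K : Type*} [Field K] (δ : K → K)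
    (n h : ℕ)
    (V : Set (Fin n × Fin (h + 1) → K))
    (hV : @IsClosed _ (zariskiTopology K (Fin n × Fin (h + 1))) V) :
    {W | Maximal (· ∈ proAdmissibleIn δ n h V) W}.Finite ∧
      ∀ W ∈ proAdmissibleIn δ n h V,
        ∃ W', Maximal (· ∈ proAdmissibleIn δ n h V) W' ∧ W ⊆ W' := by
  let := zariskiTopology K (Fin n × Fin (h + 1))
  have := noetherianSpace_zariskiTopology (K := K) (σ := Fin n × Fin (h + 1))
  obtain ⟨T, hT, hTP, hcof⟩ := exists_finite_cofinal_admissibleIn hV (Set.range (nablaMap δ n h))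
  exact ⟨hT.subset (Set.setOf_maximal_subset_of_cofinal hTP hcof),
    fun W hW => hT.exists_le_maximal_of_cofinal hTP hcof hW⟩

/-- A Zariski closed set `V ⊆ K^{n(h+1)}` has only finitely many maximal
irreducible prolongation admissible subvarieties, and every irreducible
prolongation admissible subvariety of `V` is contained in a maximal one. -/
theorem finitely_many_maximal_prolongation_admissible
    {K : Type*} [Field K] [CharZero K] (δ : K → K)
    (hδadd : ∀ a b, δ (a + b) = δ a + δ b)
    (hδmul : ∀ a b, δ (a * b) = a * δ b + b * δ a)
    (n h : ℕ) (hn : 1 ≤ n)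
    (V : Set (Fin n × Fin (h + 1) → K))
    (hV : @IsClosed _ (zariskiTopology K (Fin n × Fin (h + 1))) V) :
    {W | Maximal (· ∈ proAdmissibleIn δ n h V) W}.Finite ∧
      ∀ W ∈ proAdmissibleIn δ n h V,
        ∃ W', Maximal (· ∈ proAdmissibleIn δ n h V) W' ∧ W ⊆ W' :=
  finitely_many_maximal_prolongation_admissible_general δ n h V hV
end

section
/- Let X be a topological space and suppose X = X₁ ∪ ⋯ ∪ X_m, where each Xᵢ is an irreducible closed subset of X and Xᵢ ⊄ Xⱼ whenever i ≠ j (an irredundant irreducible decomposition). If S ⊆ X is dense in X, then S ∩ Xᵢ is dense in Xᵢ for every i = 1, …, m. (This is the key topological step in the proof of Lemma 2.12 of the paper.) -/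
/-- If `X = X₁ ∪ ⋯ ∪ X_m` is an irredundant decomposition of the whole space into
irreducible closed subsets, and `S` is dense in `X`, then `S ∩ Xᵢ` is dense in `Xᵢ`
for every `i`. -/
theorem dense_inter_of_irredundant_decomposition
    {X : Type*} [TopologicalSpace X] (m : ℕ) (C : Fin m → Set X)
    (hclosed : ∀ i, IsClosed (C i))
    (hirr : ∀ i, IsIrreducible (C i))
    (hirredundant : ∀ i j, i ≠ j → ¬ C i ⊆ C j)
    (hcover : (⋃ i, C i) = Set.univ)
    (S : Set X) (hS : Dense S) :
    ∀ i, C i ⊆ closure (S ∩ C i) := by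
  classical
  intro i
  -- the finite family of closed sets covering C i
  set t : Finset (Set X) :=
    insert (closure (S ∩ C i)) ((Finset.univ.erase i).image C) with ht
  have hcl : ∀ z ∈ t, IsClosed z := by
    intro z hz
    rw [ht, Finset.mem_insert] at hz
    rcases hz with rfl | hz
    · exact isClosed_closure
    · obtain ⟨j, -, rfl⟩ := Finset.mem_image.mp hz
      exact hclosed j
  have hsub : C i ⊆ ⋃₀ ↑t := by
    -- closure S = univ ⊆ closure (S ∩ C i) ∪ ⋃_{j ≠ i} C j
    have hSsub : S ⊆ closure (S ∩ C i) ∪ ⋃ j ∈ Finset.univ.erase i, C j := by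
      intro x hx
      have hxU : x ∈ ⋃ j, C j := by rw [hcover]; trivial
      obtain ⟨j, hj⟩ := Set.mem_iUnion.mp hxU
      by_cases hji : j = i
      · exact Or.inl (subset_closure ⟨hx, hji ▸ hj⟩)
      · exact Or.inr (Set.mem_biUnion (Finset.mem_erase.mpr ⟨hji, Finset.mem_univ j⟩) hj)
    have hclosedU : IsClosed (closure (S ∩ C i) ∪ ⋃ j ∈ Finset.univ.erase i, C j) :=
      isClosed_closure.union (Set.Finite.isClosed_biUnion (Finset.finite_toSet _)
        fun j _ => hclosed j)
    have : Set.univ ⊆ closure (S ∩ C i) ∪ ⋃ j ∈ Finset.univ.erase i, C j := by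
      have := closure_minimal hSsub hclosedU
      rwa [hS.closure_eq] at this
    intro x hx
    rcases this (Set.mem_univ x) with h | h
    · exact ⟨_, Finset.mem_insert_self _ _, h⟩
    · obtain ⟨j, hj, hxj⟩ := Set.mem_iUnion₂.mp h
      exact ⟨C j, Finset.mem_insert.mpr (Or.inr (Finset.mem_image_of_mem C hj)), hxj⟩
  obtain ⟨z, hz, hCz⟩ := (isIrreducible_iff_sUnion_isClosed.mp (hirr i)) t hcl hsub
  rw [ht, Finset.mem_insert] at hz
  rcases hz with rfl | hz
  · exact hCz
  · obtain ⟨j, hj, rfl⟩ := Finset.mem_image.mp hz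
    exact absurd hCz (hirredundant i j (Ne.symm (Finset.mem_erase.mp hj).1))
end
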